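/- Assume additionally that G is Abelian with Pontryagin dual Ĝ, and let ω ∈ Ĝ. Let b : X → ℂ be a bounded continuous function satisfying b(t⁻¹·x) = ⟨ω,t⟩·b(x) for all t ∈ G and x ∈ X, and such that the induced function G·x ↦ |b(x)| on the orbit space X/G belongs to C₀(X/G). Then: (1) for every h ∈ C_c(X) and every x ∈ X, ∫_G conj(⟨ω,t⟩)·h(t⁻¹·x)·b(t⁻¹·x) dμ(t) = E₁(h)(x)·b(x); and (2) for every ε > 0 there exists h ∈ C_c(X) such that sup_{x∈X} |E₁(h)(x)·b(x) − b(x)| ≤ ε. -/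

import Mathlib

open MeasureTheory Filter Topology Pointwise

/-!
Part (1) is pointwise: `conj ⟨ω, t⟩ * b (t⁻¹ • x) = b x` because characters take values in the
unit circle. For part (2), properness makes the orbit integral `E₁ g` of a compactly supported
continuous `g` continuous, and it is `G`-invariant by left invariance of `μ`. Given a compact
`K ⊆ X`, take a Urysohn function `0 ≤ g ≤ 1` equal to `1` on `K` and `δ = min_K E₁ g > 0`; then
`h = g / max (E₁ g) δ` satisfies `0 ≤ E₁ h ≤ 1`, with `E₁ h = 1` on `G • K`. As `|b| < ε` off a
compact subset of `X/G`, which is the image of a compact `K ⊆ X`, we get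
`|E₁ h * b - b| = (1 - E₁ h) |b| ≤ ε`.
-/

lemma IsOpenMap.exists_isCompact_subset_image {X Y : Type*} [TopologicalSpace X]
    [TopologicalSpace Y] [WeaklyLocallyCompactSpace X] {f : X → Y} (hf : IsOpenMap f)
    (hsurj : Function.Surjective f) {Q : Set Y} (hQ : IsCompact Q) :
    ∃ K : Set X, IsCompact K ∧ Q ⊆ f '' K := by
  choose N hNc hNx using fun x : X ↦ exists_compact_mem_nhds x
  obtain ⟨s, hs⟩ := hQ.elim_finite_subcover (fun x ↦ f '' interior (N x))
    (fun x ↦ hf _ isOpen_interior) fun y _ ↦ by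
      obtain ⟨x, rfl⟩ := hsurj y
      exact Set.mem_iUnion.2 ⟨x, Set.mem_image_of_mem f (mem_interior_iff_mem_nhds.2 (hNx x))⟩
  refine ⟨⋃ x ∈ s, N x, s.isCompact_biUnion fun x _ ↦ hNc x, hs.trans ?_⟩
  simp only [Set.image_iUnion₂]
  exact Set.iUnion₂_mono fun x _ ↦ Set.image_mono interior_subset

lemma HasCompactSupport.comp_inv_smul {G X M : Type*} [Group G] [TopologicalSpace G]
    [IsTopologicalGroup G] [TopologicalSpace X] [MulAction G X] [ProperSMul G X] [Zero M]
    {h : X → M} (hh : HasCompactSupport h) (x : X) :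
    HasCompactSupport fun t : G ↦ h (t⁻¹ • x) :=
  .of_support_subset_isCompact
    (ProperSMul.isCompact_setOfPred_inter_nonempty (G := G) hh isCompact_singleton)
    fun t ht ↦ ⟨x, ⟨t⁻¹ • x, subset_tsupport h ht, smul_inv_smul t x⟩, rfl⟩

section OrbitIntegral

variable {G X E : Type*} [Group G] [MulAction G X] [MeasurableSpace G]
  [NormedAddCommGroup E] [NormedSpace ℝ E]

noncomputable def orbitIntegral (μ : Measure G) (h : X → E) (x : X) : E :=
  ∫ t, h (t⁻¹ • x) ∂μ

lemma orbitIntegral_smul [MeasurableMul G] (μ : Measure G) [μ.IsMulLeftInvariant] (h : X → E)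
    (s : G) (x : X) : orbitIntegral μ h (s • x) = orbitIntegral μ h x := by
  unfold orbitIntegral
  rw [← integral_mul_left_eq_self _ s]
  simp [mul_smul]

lemma orbitIntegral_smul_of_invariant (μ : Measure G) {φ : X → ℝ}
    (hφ : ∀ (t : G) (x : X), φ (t • x) = φ x) (h : X → E) (x : X) :
    orbitIntegral μ (fun y ↦ φ y • h y) x = φ x • orbitIntegral μ h x := by
  simp only [orbitIntegral, hφ]
  exact integral_smul (φ x) _

variable [TopologicalSpace G] [IsTopologicalGroup G] [BorelSpace G] [TopologicalSpace X]
  [ContinuousSMul G X] [ProperSMul G X] (μ : Measure G) [μ.IsHaarMeasure]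

lemma continuous_orbitIntegral [WeaklyLocallyCompactSpace X] {h : X → E} (hc : Continuous h)
    (hh : HasCompactSupport h) : Continuous (orbitIntegral μ h) := by
  refine continuous_iff_continuousAt.2 fun x₀ ↦ ?_
  obtain ⟨V, hVc, hV⟩ := exists_compact_mem_nhds x₀
  refine (continuousOn_integral_of_compact_support (f := fun x (t : G) ↦ h (t⁻¹ • x)) (μ := μ)
    (ProperSMul.isCompact_setOfPred_inter_nonempty hh hVc)
    (hc.comp (continuous_snd.inv.smul continuous_fst)).continuousOn ?_).continuousAt hV
  intro x t hx ht
  by_contra hne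
  exact ht ⟨x, ⟨t⁻¹ • x, subset_tsupport h hne, smul_inv_smul t x⟩, hx⟩

lemma orbitIntegral_pos {g : X → ℝ} (hc : Continuous g) (hg : HasCompactSupport g) (hg0 : 0 ≤ g)
    {x : X} (hx : 0 < g x) : 0 < orbitIntegral μ g x := by
  have hcx : Continuous fun t : G ↦ g (t⁻¹ • x) := hc.comp (continuous_inv.smul continuous_const)
  rw [orbitIntegral, integral_pos_iff_support_of_nonneg (fun t ↦ hg0 (t⁻¹ • x))
    (hcx.integrable_of_hasCompactSupport (hg.comp_inv_smul x))]
  exact hcx.isOpen_support.measure_pos μ ⟨1, by simpa using hx.ne'⟩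

lemma exists_orbitIntegral_eq_one [LocallyCompactSpace X] [T2Space X] {K : Set X}
    (hK : IsCompact K) :
    ∃ h : X → ℝ, Continuous h ∧ HasCompactSupport h ∧
      (∀ x, orbitIntegral μ h x ∈ Set.Icc 0 1) ∧
      ∀ k ∈ K, ∀ t : G, orbitIntegral μ h (t • k) = 1 := by
  rcases K.eq_empty_or_nonempty with rfl | hKne
  · exact ⟨0, continuous_const, .zero, fun x ↦ by simp [orbitIntegral], by simp⟩
  obtain ⟨g, hgK, -, hgs, hg01⟩ :=
    exists_continuous_one_zero_of_isCompact hK isClosed_empty (Set.disjoint_empty K)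
  set F := orbitIntegral μ (g : X → ℝ)
  have hF : Continuous F := continuous_orbitIntegral μ g.continuous hgs
  have hFK : ∀ k ∈ K, 0 < F k := fun k hk ↦
    orbitIntegral_pos μ g.continuous hgs (fun x ↦ (hg01 x).1) (by simp [hgK hk])
  obtain ⟨k₀, hk₀, hmin⟩ := hK.exists_isMinOn hKne hF.continuousOn
  set δ := F k₀
  have hδ : 0 < δ := hFK k₀ hk₀
  have hFδ : ∀ x, 0 < max (F x) δ := fun x ↦ lt_max_of_lt_right hδ
  have hE : ∀ x, orbitIntegral μ (fun y ↦ (max (F y) δ)⁻¹ • g y) x = F x / max (F x) δ :=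
    fun x ↦ by
      rw [orbitIntegral_smul_of_invariant μ (fun t y ↦ by simp only [F, orbitIntegral_smul]),
        smul_eq_mul, inv_mul_eq_div]
  refine ⟨fun y ↦ (max (F y) δ)⁻¹ • g y, ?_, ?_, fun x ↦ ?_, fun k hk t ↦ ?_⟩
  · exact ((hF.max continuous_const).inv₀ fun x ↦ (hFδ x).ne').smul g.continuous
  · exact hgs.smul_left (f := fun y ↦ (max (F y) δ)⁻¹)
  · rw [hE]
    exact ⟨div_nonneg (integral_nonneg fun t ↦ (hg01 _).1) (hFδ x).le,
      div_le_one_of_le₀ (le_max_left _ _) (hFδ x).le⟩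
  · have hFk : F (t • k) = F k := orbitIntegral_smul μ g t k
    rw [hE, hFk, max_eq_left (hmin hk), div_self (hFK k hk).ne']

lemma exists_norm_orbitIntegral_mul_sub_le [LocallyCompactSpace X] [T2Space X] {b : X → ℂ}
    {K : Set X} (hK : IsCompact K) {ε : ℝ} (hε : 0 ≤ ε)
    (hb : ∀ x, (∀ k ∈ K, ∀ t : G, t • k ≠ x) → ‖b x‖ ≤ ε) :
    ∃ h : X → ℂ, Continuous h ∧ HasCompactSupport h ∧
      ∀ x, ‖orbitIntegral μ h x * b x - b x‖ ≤ ε := by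
  obtain ⟨g, hgc, hgs, hg01, hg1⟩ := exists_orbitIntegral_eq_one μ hK
  refine ⟨fun y ↦ (g y : ℂ), by fun_prop, hgs.comp_left Complex.ofReal_zero, fun x ↦ ?_⟩
  have hE : orbitIntegral μ (fun y ↦ (g y : ℂ)) x = orbitIntegral μ g x := integral_ofReal
  rw [hE]
  by_cases hx : ∃ k ∈ K, ∃ t : G, t • k = x
  · obtain ⟨k, hk, t, rfl⟩ := hx
    simp [hg1 k hk t, hε]
  · push Not at hx
    obtain ⟨hE0, hE1⟩ := hg01 x
    calc ‖((orbitIntegral μ g x : ℝ) : ℂ) * b x - b x‖ = (1 - orbitIntegral μ g x) * ‖b x‖ := by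
          rw [← sub_one_mul, norm_mul, ← Complex.ofReal_one, ← Complex.ofReal_sub,
            Complex.norm_real, Real.norm_of_nonpos (by linarith), neg_sub]
      _ ≤ 1 * ε := mul_le_mul (by linarith) (hb x hx) (norm_nonneg _) zero_le_one
      _ = ε := one_mul ε

end OrbitIntegral

lemma integral_conj_mul_eq_orbitIntegral_mul {G X : Type*} [Group G] [MulAction G X]
    [MeasurableSpace G] (μ : Measure G) (χ : G → Circle) {b : X → ℂ}
    (hb : ∀ (t : G) (x : X), b (t⁻¹ • x) = χ t * b x) (h : X → ℂ) (x : X) :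
    ∫ t, (starRingEnd ℂ) (χ t : ℂ) * h (t⁻¹ • x) * b (t⁻¹ • x) ∂μ = orbitIntegral μ h x * b x := by
  have hχ : ∀ t, (starRingEnd ℂ) (χ t : ℂ) * χ t = 1 := fun t ↦ by
    rw [Complex.conj_mul', Circle.norm_coe, Complex.ofReal_one, one_pow]
  simp_rw [hb]
  rw [orbitIntegral, ← integral_mul_const]
  congr 1 with t
  linear_combination (h (t⁻¹ • x) * b x) * hχ t

theorem stmt15_general
    {G : Type} [TopologicalSpace G] [CommGroup G] [IsTopologicalGroup G]
    [MeasurableSpace G] [BorelSpace G]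
    (μ : Measure G) [μ.IsHaarMeasure]
    {X : Type} [TopologicalSpace X] [T2Space X] [LocallyCompactSpace X]
    [MulAction G X] [ContinuousSMul G X] [ProperSMul G X]
    (ω : PontryaginDual G)
    (b : X → ℂ)
    (hb_eq : ∀ (t : G) (x : X), b (t⁻¹ • x) = (ω t : ℂ) * b x)
    -- |b| induces an element of C₀(X/G)
    (hb_C0 : ∃ β : Quotient (MulAction.orbitRel G X) → ℝ,
      (∀ x : X, β (Quotient.mk (MulAction.orbitRel G X) x) = ‖b x‖) ∧
      Continuous β ∧
      Filter.Tendsto β (Filter.cocompact (Quotient (MulAction.orbitRel G X))) (𝓝 0)) :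
    -- (1)
    (∀ h : X → ℂ, Continuous h → HasCompactSupport h → ∀ x : X,
      (∫ t, (starRingEnd ℂ) (ω t : ℂ) * h (t⁻¹ • x) * b (t⁻¹ • x) ∂μ)
        = (∫ t, h (t⁻¹ • x) ∂μ) * b x) ∧
    -- (2)
    (∀ ε > (0 : ℝ), ∃ h : X → ℂ, Continuous h ∧ HasCompactSupport h ∧
      ∀ x : X, ‖(∫ t, h (t⁻¹ • x) ∂μ) * b x - b x‖ ≤ ε) := by
  refine ⟨fun h _ _ ↦ integral_conj_mul_eq_orbitIntegral_mul μ ω hb_eq h, fun ε hε ↦ ?_⟩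
  obtain ⟨β, hβ, -, hβ0⟩ := hb_C0
  obtain ⟨Q, hQ, hβQ⟩ := hasBasis_cocompact.eventually_iff.1 (hβ0.eventually (gt_mem_nhds hε))
  obtain ⟨K, hK, hQK⟩ :=
    MulAction.isOpenQuotientMap_quotientMk.isOpenMap.exists_isCompact_subset_image
      Quotient.mk_surjective hQ
  refine exists_norm_orbitIntegral_mul_sub_le μ hK hε.le fun x hx ↦ ?_
  rw [← hβ x]
  refine (hβQ fun hxQ ↦ ?_).le
  obtain ⟨k, hk, hkx⟩ := hQK hxQ
  obtain ⟨t, ht⟩ := Quotient.exact hkx.symm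
  exact hx k hk t ht

theorem stmt15
    {G : Type} [TopologicalSpace G] [CommGroup G] [IsTopologicalGroup G]
    [LocallyCompactSpace G] [T2Space G] [MeasurableSpace G] [BorelSpace G]
    (μ : Measure G) [μ.IsHaarMeasure]
    {X : Type} [TopologicalSpace X] [T2Space X] [LocallyCompactSpace X]
    [MulAction G X] [ContinuousSMul G X] [ProperSMul G X]
    (ω : PontryaginDual G)
    (b : X → ℂ) (hb_cont : Continuous b) (hb_bdd : ∃ C : ℝ, ∀ x, ‖b x‖ ≤ C)
    (hb_eq : ∀ (t : G) (x : X), b (t⁻¹ • x) = (ω t : ℂ) * b x)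
    -- |b| induces an element of C₀(X/G)
    (hb_C0 : ∃ β : Quotient (MulAction.orbitRel G X) → ℝ,
      (∀ x : X, β (Quotient.mk (MulAction.orbitRel G X) x) = ‖b x‖) ∧
      Continuous β ∧
      Filter.Tendsto β (Filter.cocompact (Quotient (MulAction.orbitRel G X))) (𝓝 0)) :
    -- (1)
    (∀ h : X → ℂ, Continuous h → HasCompactSupport h → ∀ x : X,
      (∫ t, (starRingEnd ℂ) (ω t : ℂ) * h (t⁻¹ • x) * b (t⁻¹ • x) ∂μ)
        = (∫ t, h (t⁻¹ • x) ∂μ) * b x) ∧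
    -- (2)
    (∀ ε > (0 : ℝ), ∃ h : X → ℂ, Continuous h ∧ HasCompactSupport h ∧
      ∀ x : X, ‖(∫ t, h (t⁻¹ • x) ∂μ) * b x - b x‖ ≤ ε) :=
  stmt15_general μ ω b hb_eq hb_C0
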